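/- arXiv:1909.10700 — 3 statements merged into one kernel-verified Lean document; each statement's English description precedes it below -/
import Mathlib

section
/- Let f(r, M) = rᵀ M⁻¹ r + ln|M| for r ∈ ℝᵐ and M symmetric positive definite. Suppose there exists α > 0 such that for every feasible (r, M) with eigendecomposition M = X diag(λ) Xᵀ and r̃ = Xᵀr, one has min_i max(|r̃ᵢ|, λᵢ) ≥ α. Then f is coercive on the feasible set: if ‖r‖² + ‖M‖_F² → ∞ then f(r, M) → ∞. -/
open Matrix BigOperators

/-! In an orthonormal eigenbasis of `M`, with `r̃ = Xᵀ r`, the objective splits as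
`f(r, M) = ∑ᵢ (r̃ᵢ² / λᵢ + log λᵢ)` and `‖r‖² + ‖M‖_F² = ∑ᵢ (r̃ᵢ² + λᵢ²)`. By `log t ≤ t - 1`,
each summand is at least `1 + log r̃ᵢ²` and at least `log λᵢ`; hence it is bounded below by
`min (log α) (1 + 2 log α)` when `max (|r̃ᵢ|, λᵢ) ≥ α`, and it exceeds any `K` once
`r̃ᵢ² + λᵢ²` is large. If the total `∑ᵢ (r̃ᵢ² + λᵢ²)` is large, one coordinate is, and its
summand dominates the uniformly bounded-below rest. -/

namespace Real

lemma one_add_log_le_div_add_log {x l : ℝ} (hx : 0 < x) (hl : 0 < l) :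
    1 + log x ≤ x / l + log l := by
  have h := log_le_sub_one_of_pos (div_pos hx hl)
  rw [log_div hx.ne' hl.ne'] at h
  linarith

lemma min_log_le_sq_div_add_log {α s l : ℝ} (hα : 0 < α) (hl : 0 < l)
    (hαsl : α ≤ max |s| l) : min (log α) (1 + 2 * log α) ≤ s ^ 2 / l + log l := by
  rcases le_max_iff.mp hαsl with hs | hl'
  · have hs0 : 0 < |s| := hα.trans_le hs
    have hlog : 2 * log α ≤ log (s ^ 2) := by
      rw [← sq_abs, log_pow, Nat.cast_ofNat]
      gcongr
    have := one_add_log_le_div_add_log (pow_pos hs0 2 |>.trans_eq (sq_abs s)) hl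
    exact (min_le_right _ _).trans (by linarith)
  · have hlog : log α ≤ log l := log_le_log hα hl'
    have : 0 ≤ s ^ 2 / l := by positivity
    exact (min_le_left _ _).trans (by linarith)

lemma le_sq_div_add_log_of_exp_add_exp_lt {K s l : ℝ} (hl : 0 < l)
    (hsl : exp (K - 1) + exp (2 * K) < s ^ 2 + l ^ 2) : K ≤ s ^ 2 / l + log l := by
  rcases lt_or_ge (exp (K - 1)) (s ^ 2) with hs | hs
  · have hlog : K - 1 < log (s ^ 2) := (lt_log_iff_exp_lt ((exp_pos _).trans hs)).mpr hs
    linarith [one_add_log_le_div_add_log ((exp_pos _).trans hs) hl]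
  · have hl2 : exp K ^ 2 < l ^ 2 := by rw [← exp_nat_mul]; push_cast; linarith
    have hlog : K < log l := (lt_log_iff_exp_lt hl).mpr (lt_of_pow_lt_pow_left₀ 2 hl.le hl2)
    have : 0 ≤ s ^ 2 / l := by positivity
    linarith

end Real

lemma Finset.add_card_mul_le_sum {ι : Type*} [Fintype ι] {g : ι → ℝ} {β K : ℝ} (hβ : β ≤ 0)
    (hlow : ∀ i, β ≤ g i) {j : ι} (hj : K ≤ g j) : K + Fintype.card ι * β ≤ ∑ i, g i := by
  have h : g j - β ≤ ∑ i, (g i - β) :=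
    Finset.single_le_sum (fun i _ ↦ sub_nonneg.mpr (hlow i)) (Finset.mem_univ j)
  rw [Finset.sum_sub_distrib, Finset.sum_const, Finset.card_univ, nsmul_eq_mul] at h
  linarith

namespace Matrix

lemma sum_sum_sq_eq_trace_mul_transpose {m n : Type*} [Fintype m] [Fintype n]
    (A : Matrix m n ℝ) : ∑ i, ∑ j, A i j ^ 2 = trace (A * Aᵀ) := by
  simp [trace, mul_apply, sq]

variable {n : Type*} [Fintype n] [DecidableEq n]

lemma sum_sq_transpose_mulVec {X : Matrix n n ℝ} (hX : X * Xᵀ = 1) (r : n → ℝ) :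
    ∑ i, (Xᵀ *ᵥ r) i ^ 2 = ∑ i, r i ^ 2 := by
  have h : (Xᵀ *ᵥ r) ⬝ᵥ (Xᵀ *ᵥ r) = r ⬝ᵥ r := by
    rw [dotProduct_mulVec, vecMul_transpose, mulVec_mulVec, hX, one_mulVec]
  simpa [dotProduct, sq] using h

lemma conj_diagonal_mul_conj_diagonal {X : Matrix n n ℝ} (hX : Xᵀ * X = 1) (d e : n → ℝ) :
    X * diagonal d * Xᵀ * (X * diagonal e * Xᵀ) = X * diagonal (d * e) * Xᵀ := by
  simp only [mul_assoc]
  rw [← mul_assoc Xᵀ, hX, one_mul, ← mul_assoc (diagonal d), diagonal_mul_diagonal']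
  rfl

lemma sum_sum_sq_conj_diagonal {X : Matrix n n ℝ} (hX : Xᵀ * X = 1) (d : n → ℝ) :
    ∑ i, ∑ j, (X * diagonal d * Xᵀ) i j ^ 2 = ∑ i, d i ^ 2 := by
  have hsymm : (X * diagonal d * Xᵀ)ᵀ = X * diagonal d * Xᵀ := by
    simp only [transpose_mul, transpose_transpose, diagonal_transpose, mul_assoc]
  rw [sum_sum_sq_eq_trace_mul_transpose, hsymm, conj_diagonal_mul_conj_diagonal hX,
    trace_mul_cycle, hX, one_mul, trace_diagonal]
  simp [sq]

lemma inv_conj_diagonal {X : Matrix n n ℝ} (hXX : Xᵀ * X = 1) (hXXt : X * Xᵀ = 1) {d : n → ℝ}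
    (hd : ∀ i, d i ≠ 0) : (X * diagonal d * Xᵀ)⁻¹ = X * diagonal d⁻¹ * Xᵀ := by
  apply inv_eq_right_inv
  have : d * d⁻¹ = fun _ ↦ 1 := funext fun i ↦ mul_inv_cancel₀ (hd i)
  rw [conj_diagonal_mul_conj_diagonal hXX, this, diagonal_one, mul_one, hXXt]

lemma dotProduct_conj_diagonal_mulVec (X : Matrix n n ℝ) (d r : n → ℝ) :
    r ⬝ᵥ ((X * diagonal d * Xᵀ) *ᵥ r) = ∑ i, d i * (Xᵀ *ᵥ r) i ^ 2 := by
  rw [← mulVec_mulVec, ← mulVec_mulVec, dotProduct_mulVec, ← mulVec_transpose]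
  simp [dotProduct, mulVec_diagonal, sq, mul_left_comm]

lemma dotProduct_inv_conj_diagonal_mulVec {X : Matrix n n ℝ} (hXX : Xᵀ * X = 1)
    (hXXt : X * Xᵀ = 1) {d : n → ℝ} (hd : ∀ i, d i ≠ 0) (r : n → ℝ) :
    r ⬝ᵥ ((X * diagonal d * Xᵀ)⁻¹ *ᵥ r) = ∑ i, (Xᵀ *ᵥ r) i ^ 2 / d i := by
  simp only [inv_conj_diagonal hXX hXXt hd, dotProduct_conj_diagonal_mulVec, Pi.inv_apply,
    inv_mul_eq_div]

lemma det_conj_diagonal {X : Matrix n n ℝ} (hX : X * Xᵀ = 1) (d : n → ℝ) :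
    (X * diagonal d * Xᵀ).det = ∏ i, d i := by
  rw [det_mul, det_mul, mul_right_comm, ← det_mul, hX, det_one, one_mul, det_diagonal]

lemma PosDef.exists_orthogonal_diagonal {A : Matrix n n ℝ} (hA : A.PosDef) :
    ∃ (X : Matrix n n ℝ) (d : n → ℝ), Xᵀ * X = 1 ∧ X * Xᵀ = 1 ∧ A = X * diagonal d * Xᵀ ∧
      ∀ i, 0 < d i := by
  set U := hA.isHermitian.eigenvectorUnitary
  have hstar : star (U : Matrix n n ℝ) = (U : Matrix n n ℝ)ᵀ :=
    conjTranspose_eq_transpose_of_trivial _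
  refine ⟨U, hA.isHermitian.eigenvalues, ?_, ?_, ?_, hA.eigenvalues_pos⟩
  · rw [← hstar]; exact Unitary.coe_star_mul_self U
  · rw [← hstar]; exact Unitary.coe_mul_star_self U
  · simpa [← hstar] using hA.isHermitian.spectral_theorem

end Matrix

/-- Coercivity of `f(r, M) = rᵀ M⁻¹ r + ln det M` on a feasible set on which the
uniform eigenvalue/residual lower bound `min_i max(|r̃ᵢ|, λᵢ) ≥ α > 0` holds:
if `‖r‖² + ‖M‖_F² → ∞` then `f(r, M) → ∞`. -/
theorem stmt2 (m : ℕ) (F : Set ((Fin m → ℝ) × Matrix (Fin m) (Fin m) ℝ))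
    (hPD : ∀ p ∈ F, p.2.PosDef)
    (α : ℝ) (hα : 0 < α)
    (hbound : ∀ p ∈ F, ∀ (X : Matrix (Fin m) (Fin m) ℝ) (lam : Fin m → ℝ),
      Xᵀ * X = 1 → X * Xᵀ = 1 → p.2 = X * Matrix.diagonal lam * Xᵀ →
      ∀ i, α ≤ max |(Xᵀ *ᵥ p.1) i| (lam i)) :
    ∀ c : ℝ, ∃ R : ℝ, ∀ p ∈ F,
      R < (∑ i, p.1 i ^ 2) + (∑ i, ∑ j, p.2 i j ^ 2) →
      c ≤ p.1 ⬝ᵥ (p.2⁻¹ *ᵥ p.1) + Real.log p.2.det := by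
  intro c
  -- clipped at `0` so that the `m - 1` summands other than the large one still sum to `≥ m * β`
  set β := min (min (Real.log α) (1 + 2 * Real.log α)) 0
  set K := c - m * β
  refine ⟨m * (Real.exp (K - 1) + Real.exp (2 * K)), fun p hp hR ↦ ?_⟩
  obtain ⟨X, lam, hXX, hXXt, hM, hlam⟩ := (hPD p hp).exists_orthogonal_diagonal
  have hαsl := hbound p hp X lam hXX hXXt hM
  set s := Xᵀ *ᵥ p.1
  rw [← sum_sq_transpose_mulVec hXXt, hM, sum_sum_sq_conj_diagonal hXX,
    ← Finset.sum_add_distrib] at hR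
  obtain ⟨j, -, hj⟩ := Finset.exists_lt_of_sum_lt (s := Finset.univ)
    (f := fun _ ↦ Real.exp (K - 1) + Real.exp (2 * K)) (g := fun i ↦ s i ^ 2 + lam i ^ 2)
    (by rwa [Finset.sum_const, Finset.card_univ, Fintype.card_fin, nsmul_eq_mul])
  rw [hM, dotProduct_inv_conj_diagonal_mulVec hXX hXXt (fun i ↦ (hlam i).ne'),
    det_conj_diagonal hXXt, Real.log_prod (fun i _ ↦ (hlam i).ne'), ← Finset.sum_add_distrib]
  have := Finset.add_card_mul_le_sum (min_le_right _ 0)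
    (fun i ↦ (min_le_left _ _).trans (Real.min_log_le_sq_div_add_log hα (hlam i) (hαsl i)))
    (Real.le_sq_div_add_log_of_exp_add_exp_lt (hlam j) hj)
  simp only [Fintype.card_fin] at this
  linarith
end

section
/- With the setup of the trimmed covariance (w_j = 0, w_i = 1 for i ≠ j), for any residual vector r ∈ ℝⁿ, the quadratic form (√W r)ᵀ (√W Z Γ Zᵀ √W + Λ^{⊙w})⁻¹ (√W r) equals r₋ⱼᵀ ((ZΓZᵀ + Λ)₋ⱼ)⁻¹ r₋ⱼ, where the subscript −j denotes deleting the j-th entry (resp. j-th row and column). -/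
/-! Since `w_j = 0`, the vector `√W r` vanishes at `j`, and `B = √W ZΓZᵀ √W + Λ^{⊙w}` has row and
column `j` equal to those of the identity (its `(j, j)` entry is `λ_j ^ 0 = 1`), while off `j` it
agrees with `A = ZΓZᵀ + Λ`. Reindexing `Fin (n + 1) ≃ Fin n ⊕ Unit` makes `B` block diagonal with
blocks `A₋ⱼ` and `1`, so `(B⁻¹)₋ⱼ = (A₋ⱼ)⁻¹` (also when `A₋ⱼ` is singular: both junk inverses
are then `0`), and a quadratic form evaluated at a vector vanishing at `j` only sees the `−j`
block. -/

open Matrix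

namespace Matrix

section Semiring

variable {α : Type*} [NonUnitalNonAssocSemiring α]

theorem dotProduct_mulVec_eq_submatrix_succAbove {k : ℕ} (M : Matrix (Fin (k + 1)) (Fin (k + 1)) α)
    {j : Fin (k + 1)} {s : Fin (k + 1) → α} (hs : s j = 0) :
    s ⬝ᵥ (M *ᵥ s) =
      (s ∘ j.succAbove) ⬝ᵥ (M.submatrix j.succAbove j.succAbove *ᵥ (s ∘ j.succAbove)) := by
  simp only [dotProduct, mulVec, Fin.sum_univ_succAbove _ j, hs, zero_mul, mul_zero, zero_add,
    Function.comp_apply, submatrix_apply]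

end Semiring

variable {m n α : Type*} [Fintype m] [Fintype n] [DecidableEq m] [DecidableEq n] [CommRing α]

theorem toBlocks₁₁_inv_fromBlocks_zero_zero (A : Matrix m m α) {D : Matrix n n α}
    (hD : IsUnit D) : (fromBlocks A 0 0 D)⁻¹.toBlocks₁₁ = A⁻¹ := by
  by_cases hA : IsUnit A
  · rw [inv_fromBlocks_zero₂₁_of_isUnit_iff A 0 D (iff_of_true hA hD), toBlocks_fromBlocks₁₁]
  · have hAD : ¬IsUnit (fromBlocks A 0 0 D) := by simp [hA]
    rw [nonsing_inv_eq_ringInverse, Ring.inverse_non_unit _ hAD, nonsing_inv_eq_ringInverse,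
      Ring.inverse_non_unit _ hA]
    rfl

theorem inv_submatrix_succAbove {k : ℕ} {B : Matrix (Fin (k + 1)) (Fin (k + 1)) α}
    {j : Fin (k + 1)} (hrow : ∀ i, i ≠ j → B j i = 0) (hcol : ∀ i, i ≠ j → B i j = 0)
    (hjj : IsUnit (B j j)) :
    (B.submatrix j.succAbove j.succAbove)⁻¹ = B⁻¹.submatrix j.succAbove j.succAbove := by
  let e : Fin k ⊕ Unit ≃ Fin (k + 1) :=
    (Equiv.optionEquivSumPUnit (Fin k)).symm.trans (finSuccEquiv' j).symm
  have hblocks : B.submatrix e e =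
      fromBlocks (B.submatrix j.succAbove j.succAbove) 0 0 (of fun _ _ => B j j) := by
    ext (a | _) (b | _) <;> simp [e, hrow, hcol, Fin.succAbove_ne]
  have hunit : IsUnit (of fun _ _ => B j j : Matrix Unit Unit α) := by
    rwa [isUnit_iff_isUnit_det, det_unique]
  calc (B.submatrix j.succAbove j.succAbove)⁻¹
      = (B.submatrix e e)⁻¹.toBlocks₁₁ := by
        rw [hblocks, toBlocks₁₁_inv_fromBlocks_zero_zero _ hunit]
    _ = B⁻¹.submatrix j.succAbove j.succAbove := by
        rw [inv_submatrix_equiv]; rfl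

end Matrix

theorem stmt8_general (n k : ℕ) (j : Fin (n + 1))
    (Z : Matrix (Fin (n + 1)) (Fin k) ℝ) (Γ : Matrix (Fin k) (Fin k) ℝ)
    (lam : Fin (n + 1) → ℝ)
    (w : Fin (n + 1) → ℝ) (hw : w = fun i => if i = j then 0 else 1)
    (r : Fin (n + 1) → ℝ) :
    let sqrtW : Matrix (Fin (n + 1)) (Fin (n + 1)) ℝ :=
      Matrix.diagonal fun i => Real.sqrt (w i)
    let Λw : Matrix (Fin (n + 1)) (Fin (n + 1)) ℝ :=
      Matrix.diagonal fun i => (lam i) ^ (w i)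
    let A : Matrix (Fin (n + 1)) (Fin (n + 1)) ℝ :=
      Z * Γ * Zᵀ + Matrix.diagonal lam
    let B : Matrix (Fin (n + 1)) (Fin (n + 1)) ℝ :=
      sqrtW * (Z * Γ * Zᵀ) * sqrtW + Λw
    (sqrtW *ᵥ r) ⬝ᵥ (B⁻¹ *ᵥ (sqrtW *ᵥ r))
      = (r ∘ j.succAbove) ⬝ᵥ
          ((A.submatrix j.succAbove j.succAbove)⁻¹ *ᵥ (r ∘ j.succAbove)) := by
  intro sqrtW Λw A B
  subst hw
  have hsqrt : ∀ i, √(if i = j then (0 : ℝ) else 1) = if i = j then 0 else 1 := fun i => by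
    split_ifs <;> simp
  have hB : ∀ i i', B i i' = if i = j ∨ i' = j then (if i = i' then 1 else 0) else A i i' := by
    intro i i'
    by_cases hi : i = j <;> by_cases hi' : i' = j <;>
      simp [B, A, sqrtW, Λw, hsqrt, diagonal_apply, hi, hi']
  have hrow : ∀ i, i ≠ j → B j i = 0 := fun i hi => by simp [hB, Ne.symm hi]
  have hcol : ∀ i, i ≠ j → B i j = 0 := fun i hi => by simp [hB, hi]
  have hjj : IsUnit (B j j) := by simp [hB]
  have hsub : B.submatrix j.succAbove j.succAbove = A.submatrix j.succAbove j.succAbove := by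
    ext a b; simp [hB, Fin.succAbove_ne]
  have hs : sqrtW *ᵥ r = Function.update r j 0 := by
    ext i; by_cases hi : i = j <;> simp [sqrtW, mulVec_diagonal, hsqrt, hi]
  rw [hs, dotProduct_mulVec_eq_submatrix_succAbove _ (Function.update_self j 0 r),
    ← inv_submatrix_succAbove hrow hcol hjj, hsub,
    Function.update_comp_eq_of_forall_ne _ _ (Fin.succAbove_ne j)]

/-- With the trimmed covariance setup (`w_j = 0`, `w_i = 1` for `i ≠ j`), for any
residual `r`, the quadratic form `(√W r)ᵀ (√W ZΓZᵀ√W + Λ^{⊙w})⁻¹ (√W r)` equals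
the quadratic form of the deleted system `r₋ⱼᵀ ((ZΓZᵀ + Λ)₋ⱼ)⁻¹ r₋ⱼ`. -/
theorem stmt8 (n k : ℕ) (j : Fin (n + 1))
    (Z : Matrix (Fin (n + 1)) (Fin k) ℝ) (Γ : Matrix (Fin k) (Fin k) ℝ)
    (hΓ : Γ.PosSemidef) (lam : Fin (n + 1) → ℝ) (hlam : ∀ i, 0 < lam i)
    (w : Fin (n + 1) → ℝ) (hw : w = fun i => if i = j then 0 else 1)
    (r : Fin (n + 1) → ℝ) :
    let sqrtW : Matrix (Fin (n + 1)) (Fin (n + 1)) ℝ :=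
      Matrix.diagonal fun i => Real.sqrt (w i)
    let Λw : Matrix (Fin (n + 1)) (Fin (n + 1)) ℝ :=
      Matrix.diagonal fun i => (lam i) ^ (w i)
    let A : Matrix (Fin (n + 1)) (Fin (n + 1)) ℝ :=
      Z * Γ * Zᵀ + Matrix.diagonal lam
    let B : Matrix (Fin (n + 1)) (Fin (n + 1)) ℝ :=
      sqrtW * (Z * Γ * Zᵀ) * sqrtW + Λw
    (sqrtW *ᵥ r) ⬝ᵥ (B⁻¹ *ᵥ (sqrtW *ᵥ r))
      = (r ∘ j.succAbove) ⬝ᵥ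
          ((A.submatrix j.succAbove j.succAbove)⁻¹ *ᵥ (r ∘ j.succAbove)) :=
  stmt8_general n k j Z Γ lam w hw r
end

section
/- The projection of a point x ∈ ℝⁿ onto the capped simplex Δ_h = {w : 1ᵀw = h, 0 ≤ w ≤ 1} exists and is unique, and is given componentwise by proj(x)ᵢ = median(0, xᵢ − τ, 1) = min(max(xᵢ − τ, 0), 1) for some τ ∈ ℝ satisfying Σᵢ min(max(xᵢ − τ, 0), 1) = h. -/
/-!
The clamped shift `pᵢ = min (max (xᵢ - τ) 0) 1` is a continuous, antitone function of `τ`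
running from `card ι` down to `0`, so the intermediate value theorem yields `τ` with `p ∈ Δ_h`.
Each coordinate `pᵢ` is the projection of `xᵢ - τ` onto `[0, 1]`, so
`(qᵢ - pᵢ) (pᵢ - (xᵢ - τ)) ≥ 0` for every `q ∈ Δ_h`; summing, the `τ`-terms cancel because
`∑ qᵢ = ∑ pᵢ = h`, which leaves the variational inequality `⟪q - p, p - x⟫ ≥ 0`. By Pythagoras
this gives `‖q - x‖² ≥ ‖q - p‖² + ‖p - x‖²`, hence both minimality and uniqueness of `p`.
-/

open scoped RealInnerProductSpace

section InnerProductSpace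

variable {E : Type*} [NormedAddCommGroup E] [InnerProductSpace ℝ E] {p q x : E}

theorem sq_norm_sub_add_sq_norm_sub_le_of_inner_nonneg (h : 0 ≤ ⟪q - p, p - x⟫) :
    ‖q - p‖ ^ 2 + ‖p - x‖ ^ 2 ≤ ‖q - x‖ ^ 2 := by
  rw [show q - x = (q - p) + (p - x) by abel, norm_add_sq_real]
  linarith

theorem norm_sub_le_of_inner_nonneg (h : 0 ≤ ⟪q - p, p - x⟫) : ‖p - x‖ ≤ ‖q - x‖ := by
  have := sq_norm_sub_add_sq_norm_sub_le_of_inner_nonneg h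
  exact pow_le_pow_iff_left₀ (norm_nonneg _) (norm_nonneg _) two_ne_zero |>.mp
    (by nlinarith [sq_nonneg ‖q - p‖])

theorem eq_of_inner_nonneg_of_norm_sub_le (h : 0 ≤ ⟪q - p, p - x⟫) (hle : ‖q - x‖ ≤ ‖p - x‖) :
    q = p := by
  have := sq_norm_sub_add_sq_norm_sub_le_of_inner_nonneg h
  have hsq : ‖q - p‖ ^ 2 ≤ 0 := by nlinarith [norm_nonneg (q - x)]
  exact sub_eq_zero.mp (norm_eq_zero.mp (pow_eq_zero_iff two_ne_zero |>.mp
    (le_antisymm hsq (sq_nonneg _))))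

end InnerProductSpace

theorem sub_mul_sub_clamp_nonneg {s : ℝ} (hs₀ : 0 ≤ s) (hs₁ : s ≤ 1) (t : ℝ) :
    0 ≤ (s - min (max t 0) 1) * (min (max t 0) 1 - t) := by
  rcases le_total t 0 with ht | ht
  · rw [max_eq_right ht, min_eq_left zero_le_one]
    nlinarith
  rcases le_total t 1 with ht' | ht'
  · rw [max_eq_left ht, min_eq_left ht']
    simp
  · rw [max_eq_left ht, min_eq_right ht']
    nlinarith

theorem exists_sum_clamp_eq {ι : Type*} [Fintype ι] (x : ι → ℝ) {h : ℝ} (h0 : 0 ≤ h)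
    (hcard : h ≤ Fintype.card ι) : ∃ τ : ℝ, ∑ i, min (max (x i - τ) 0) 1 = h := by
  set S := ∑ i, |x i|
  have hS : ∀ i, |x i| ≤ S := fun i =>
    Finset.single_le_sum (fun j _ => abs_nonneg (x j)) (Finset.mem_univ i)
  have hS₀ : 0 ≤ S := Finset.sum_nonneg fun j _ => abs_nonneg (x j)
  have hcont : Continuous fun τ => ∑ i, min (max (x i - τ) 0) 1 := by fun_prop
  have hlow : ∑ i, min (max (x i - S) 0) 1 = 0 := by
    refine Finset.sum_eq_zero fun i _ => ?_
    rw [max_eq_right (by linarith [le_abs_self (x i), hS i]), min_eq_left zero_le_one]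
  have hhigh : ∑ i, min (max (x i - (-S - 1)) 0) 1 = Fintype.card ι := by
    have hone : ∀ i, min (max (x i - (-S - 1)) 0) 1 = 1 := fun i => by
      have : 1 ≤ x i - (-S - 1) := by linarith [neg_abs_le (x i), hS i]
      rw [max_eq_left (by linarith), min_eq_right this]
    simp [hone]
  obtain ⟨τ, -, hτ⟩ := intermediate_value_Icc' (by linarith : -S - 1 ≤ S) hcont.continuousOn
    (by rw [hlow, hhigh]; exact ⟨h0, hcard⟩)
  exact ⟨τ, hτ⟩

section CappedSimplex

variable {ι : Type*} [Fintype ι]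

def cappedSimplex (ι : Type*) [Fintype ι] (h : ℝ) : Set (EuclideanSpace ℝ ι) :=
  {w | (∑ i, w i) = h ∧ ∀ i, 0 ≤ w i ∧ w i ≤ 1}

def clampShift (x : EuclideanSpace ℝ ι) (τ : ℝ) : EuclideanSpace ℝ ι :=
  WithLp.toLp 2 fun i => min (max (x i - τ) 0) 1

theorem clampShift_mem_cappedSimplex {x : EuclideanSpace ℝ ι} {τ h : ℝ}
    (hτ : ∑ i, min (max (x i - τ) 0) 1 = h) : clampShift x τ ∈ cappedSimplex ι h :=
  ⟨hτ, fun _ => ⟨le_min (le_max_right _ _) zero_le_one, min_le_right _ _⟩⟩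

theorem inner_sub_clampShift_nonneg {x q : EuclideanSpace ℝ ι} {τ h : ℝ}
    (hτ : ∑ i, min (max (x i - τ) 0) 1 = h) (hq : q ∈ cappedSimplex ι h) :
    0 ≤ ⟪q - clampShift x τ, clampShift x τ - x⟫ := by
  set p := clampShift x τ
  have hsum : ∑ i, (q i - p i) = 0 := by
    rw [Finset.sum_sub_distrib, hq.1, (clampShift_mem_cappedSimplex hτ).1, sub_self]
  have hsplit : ⟪q - p, p - x⟫ = ∑ i, (q i - p i) * (p i - (x i - τ)) - τ * ∑ i, (q i - p i) := by
    simp only [PiLp.inner_apply, PiLp.sub_apply, RCLike.inner_apply, conj_trivial,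
      Finset.mul_sum, ← Finset.sum_sub_distrib]
    exact Finset.sum_congr rfl fun i _ => by ring
  rw [hsplit, hsum, mul_zero, sub_zero]
  exact Finset.sum_nonneg fun i _ => sub_mul_sub_clamp_nonneg (hq.2 i).1 (hq.2 i).2 _

end CappedSimplex

/-- The Euclidean projection onto the capped simplex `Δ_h` exists, is unique, and
is given componentwise by `proj(x)ᵢ = min (max (xᵢ − τ) 0) 1` for some `τ ∈ ℝ`
with `∑ i, min (max (xᵢ − τ) 0) 1 = h`. -/
theorem stmt11 (n : ℕ) (h : ℝ) (h0 : 0 ≤ h) (hn : h ≤ n)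
    (x : EuclideanSpace ℝ (Fin n)) :
    let Δ : Set (EuclideanSpace ℝ (Fin n)) :=
      {w | (∑ i, w i) = h ∧ ∀ i, 0 ≤ w i ∧ w i ≤ 1}
    ∃ (p : EuclideanSpace ℝ (Fin n)) (τ : ℝ),
      (p ∈ Δ ∧ ∀ q ∈ Δ, ‖p - x‖ ≤ ‖q - x‖) ∧
      (∀ q : EuclideanSpace ℝ (Fin n),
        (q ∈ Δ ∧ ∀ q' ∈ Δ, ‖q - x‖ ≤ ‖q' - x‖) → q = p) ∧
      (∀ i, p i = min (max (x i - τ) 0) 1) ∧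
      (∑ i, min (max (x i - τ) 0) 1) = h := by
  intro Δ
  obtain ⟨τ, hτ⟩ := exists_sum_clamp_eq (fun i => x i) h0 (by simpa using hn)
  have hp : clampShift x τ ∈ cappedSimplex (Fin n) h := clampShift_mem_cappedSimplex hτ
  refine ⟨clampShift x τ, τ, ⟨hp, fun q hq => ?_⟩, fun q hq => ?_, fun _ => rfl, hτ⟩
  · exact norm_sub_le_of_inner_nonneg (inner_sub_clampShift_nonneg hτ hq)
  · exact eq_of_inner_nonneg_of_norm_sub_le (inner_sub_clampShift_nonneg hτ hq.1) (hq.2 _ hp)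
end
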